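/- Let f₄(x) = sin(xπ/2)·sin(xπ/3)·sin(xπ/5)·sin(xπ/7). Then the set of x in the interval [7/2, 49 + 1/3] with f₄(x) = 0, f₄′(x) = 0 and f₄″(x) = 0 is exactly {30, 42}, and at both of these points the third derivative f₄‴ is nonzero; that is, the zeros of f₄ of multiplicity at least three in that interval are exactly 30 and 42, and both are triple zeros. In particular, f₄ has no zero of multiplicity four or more in that interval. -/

import Mathlib

/-!
Each factor `sin (x π / p)` has only simple zeros, at the multiples of `p`. Since analytic orders
add under multiplication, the order of vanishing of `f₄` at `x` is the number of
`p ∈ {2, 3, 5, 7}` with `x / p ∈ ℤ`. A positive order forces `x ∈ ℤ`, and among the integers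
`4 ≤ n ≤ 49` exactly `30` and `42` are divisible by three of these primes, none by all four.
Vanishing of `f₄, f₄', f₄''` at `x` means order at least `3`, and order exactly `3` means
moreover `f₄''' x ≠ 0`.
-/
noncomputable def pruitt4 : ℝ → ℝ := fun x =>
  Real.sin (x * Real.pi / 2) * Real.sin (x * Real.pi / 3) * Real.sin (x * Real.pi / 5) *
    Real.sin (x * Real.pi / 7)

open Real

section AnalyticOrder

variable {𝕜 E : Type*} [NontriviallyNormedField 𝕜] [CharZero 𝕜] [NormedAddCommGroup E]
  [NormedSpace 𝕜 E] [CompleteSpace E] {f : 𝕜 → E} {x : 𝕜}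

lemma AnalyticAt.three_le_analyticOrderAt_iff (hf : AnalyticAt 𝕜 f x) :
    3 ≤ analyticOrderAt f x ↔ f x = 0 ∧ deriv f x = 0 ∧ deriv (deriv f) x = 0 := by
  rw [← Nat.cast_ofNat, natCast_le_analyticOrderAt_iff_iteratedDeriv_eq_zero hf]
  simp only [Nat.forall_lt_succ_right, Nat.not_lt_zero, IsEmpty.forall_iff, implies_true,
    true_and, iteratedDeriv_succ, iteratedDeriv_zero, and_assoc]

lemma AnalyticAt.deriv_deriv_deriv_ne_zero_of_analyticOrderAt_eq_three (hf : AnalyticAt 𝕜 f x)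
    (h : analyticOrderAt f x = 3) : deriv (deriv (deriv f)) x ≠ 0 := by
  rw [← Nat.cast_ofNat, analyticOrderAt_eq_nat_iff_iteratedDeriv_eq_zero hf] at h
  simpa [iteratedDeriv_succ] using h.2

end AnalyticOrder

lemma sin_mul_pi_div_eq_zero_iff {p : ℝ} (hp : p ≠ 0) {x : ℝ} :
    sin (x * π / p) = 0 ↔ ∃ k : ℤ, x = k * p := by
  rw [sin_eq_zero_iff]
  refine exists_congr fun k => ?_
  rw [eq_div_iff hp]
  constructor <;> intro h
  · nlinarith [pi_pos]
  · rw [h]; ring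

lemma sin_intCast_mul_pi_div_eq_zero_iff {p : ℤ} (hp : p ≠ 0) (n : ℤ) :
    sin (n * π / p) = 0 ↔ p ∣ n := by
  rw [sin_mul_pi_div_eq_zero_iff (Int.cast_ne_zero.2 hp), dvd_iff_exists_eq_mul_left]
  exact exists_congr fun k => by norm_cast

lemma analyticOrderAt_sin_mul_pi_div {p : ℝ} (hp : p ≠ 0) (x : ℝ) :
    analyticOrderAt (fun y => sin (y * π / p)) x = if sin (x * π / p) = 0 then 1 else 0 := by
  have hsin : AnalyticAt ℝ (fun y => sin (y * π / p)) x := by fun_prop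
  split_ifs with h
  · refine hsin.analyticOrderAt_eq_one_of_zero_deriv_ne_zero h ?_
    have hderiv : HasDerivAt (fun y => sin (y * π / p)) (cos (x * π / p) * (π / p)) x := by
      simpa using ((hasDerivAt_id x).mul_const π |>.div_const p).sin
    rw [hderiv.deriv]
    have hcos : cos (x * π / p) ≠ 0 := by
      rcases sin_eq_zero_iff_cos_eq.1 h with h | h <;> simp [h]
    exact mul_ne_zero hcos (div_ne_zero pi_ne_zero hp)
  · exact hsin.analyticOrderAt_eq_zero.2 h

def smallPrimeDvdCount (n : ℤ) : ℕ := (({2, 3, 5, 7} : Finset ℤ).filter (· ∣ n)).card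

lemma smallPrimeDvdCount_of_mem_Icc :
    ∀ n ∈ Finset.Icc (4 : ℤ) 49,
      (3 ≤ smallPrimeDvdCount n ↔ n = 30 ∨ n = 42) ∧ smallPrimeDvdCount n ≤ 3 := by
  decide

lemma analyticAt_pruitt4 (x : ℝ) : AnalyticAt ℝ pruitt4 x := by
  unfold pruitt4; fun_prop

lemma analyticOrderAt_pruitt4 (x : ℝ) :
    analyticOrderAt pruitt4 x =
      (if sin (x * π / 2) = 0 then 1 else 0) + (if sin (x * π / 3) = 0 then 1 else 0) +
        (if sin (x * π / 5) = 0 then 1 else 0) + (if sin (x * π / 7) = 0 then 1 else 0) := by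
  have h (p : ℝ) : AnalyticAt ℝ (fun y => sin (y * π / p)) x := by fun_prop
  change analyticOrderAt ((fun y => sin (y * π / 2)) * (fun y => sin (y * π / 3)) *
    (fun y => sin (y * π / 5)) * (fun y => sin (y * π / 7))) x = _
  rw [analyticOrderAt_mul (((h 2).mul (h 3)).mul (h 5)) (h 7),
    analyticOrderAt_mul ((h 2).mul (h 3)) (h 5), analyticOrderAt_mul (h 2) (h 3)]
  simp only [analyticOrderAt_sin_mul_pi_div (p := 2) two_ne_zero,
    analyticOrderAt_sin_mul_pi_div (p := 3) three_ne_zero,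
    analyticOrderAt_sin_mul_pi_div (p := 5) (by norm_num),
    analyticOrderAt_sin_mul_pi_div (p := 7) (by norm_num)]

lemma analyticOrderAt_pruitt4_intCast (n : ℤ) :
    analyticOrderAt pruitt4 n = smallPrimeDvdCount n := by
  have hdvd (p : ℤ) (hp : p ≠ 0) := sin_intCast_mul_pi_div_eq_zero_iff hp n
  have h2 : sin (n * π / 2) = 0 ↔ 2 ∣ n := by exact_mod_cast hdvd 2 two_ne_zero
  have h3 : sin (n * π / 3) = 0 ↔ 3 ∣ n := by exact_mod_cast hdvd 3 three_ne_zero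
  have h5 : sin (n * π / 5) = 0 ↔ 5 ∣ n := by exact_mod_cast hdvd 5 (by norm_num)
  have h7 : sin (n * π / 7) = 0 ↔ 7 ∣ n := by exact_mod_cast hdvd 7 (by norm_num)
  rw [analyticOrderAt_pruitt4, smallPrimeDvdCount, Finset.card_filter,
    Finset.sum_insert (by decide), Finset.sum_insert (by decide), Finset.sum_insert (by decide),
    Finset.sum_singleton]
  push_cast
  simp only [h2, h3, h5, h7, add_assoc]

lemma exists_intCast_of_analyticOrderAt_pruitt4_ne_zero {x : ℝ}
    (h : analyticOrderAt pruitt4 x ≠ 0) : ∃ n : ℤ, x = n := by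
  have of_sin_eq_zero (p : ℤ) (hp : p ≠ 0) (hs : sin (x * π / p) = 0) : ∃ n : ℤ, x = n := by
    obtain ⟨k, rfl⟩ := (sin_mul_pi_div_eq_zero_iff (Int.cast_ne_zero.2 hp)).1 hs
    exact ⟨k * p, by push_cast; rfl⟩
  rw [(analyticAt_pruitt4 x).analyticOrderAt_ne_zero] at h
  simp only [pruitt4, mul_eq_zero] at h
  rcases h with ((h | h) | h) | h
  · exact of_sin_eq_zero 2 two_ne_zero (by exact_mod_cast h)
  · exact of_sin_eq_zero 3 three_ne_zero (by exact_mod_cast h)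
  · exact of_sin_eq_zero 5 (by norm_num) (by exact_mod_cast h)
  · exact of_sin_eq_zero 7 (by norm_num) (by exact_mod_cast h)

section Interval

variable {x : ℝ} (hx : x ∈ Set.Icc (7 / 2 : ℝ) (49 + 1 / 3))
include hx

lemma exists_intCast_mem_Icc_of_analyticOrderAt_pruitt4_ne_zero
    (h : analyticOrderAt pruitt4 x ≠ 0) : ∃ n ∈ Finset.Icc (4 : ℤ) 49, x = n := by
  obtain ⟨n, rfl⟩ := exists_intCast_of_analyticOrderAt_pruitt4_ne_zero h
  have hlo : (3 : ℝ) < n := by linarith [hx.1]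
  have hhi : (n : ℝ) < 50 := by linarith [hx.2]
  have : 3 < n ∧ n < 50 := ⟨by exact_mod_cast hlo, by exact_mod_cast hhi⟩
  exact ⟨n, Finset.mem_Icc.2 ⟨by omega, by omega⟩, rfl⟩

lemma analyticOrderAt_pruitt4_le_three : analyticOrderAt pruitt4 x ≤ 3 := by
  by_cases h : analyticOrderAt pruitt4 x = 0
  · simp [h]
  obtain ⟨n, hn, rfl⟩ := exists_intCast_mem_Icc_of_analyticOrderAt_pruitt4_ne_zero hx h
  rw [analyticOrderAt_pruitt4_intCast]
  exact_mod_cast (smallPrimeDvdCount_of_mem_Icc n hn).2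

lemma three_le_analyticOrderAt_pruitt4_iff :
    3 ≤ analyticOrderAt pruitt4 x ↔ x = 30 ∨ x = 42 := by
  constructor
  · intro h
    obtain ⟨n, hn, rfl⟩ := exists_intCast_mem_Icc_of_analyticOrderAt_pruitt4_ne_zero hx
      (ne_of_gt (lt_of_lt_of_le (by norm_num) h))
    rw [analyticOrderAt_pruitt4_intCast] at h
    rcases (smallPrimeDvdCount_of_mem_Icc n hn).1.1 (by exact_mod_cast h) with rfl | rfl <;>
      norm_num
  · rintro (rfl | rfl)
    · rw [show (30 : ℝ) = (30 : ℤ) by norm_num, analyticOrderAt_pruitt4_intCast]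
      exact_mod_cast (show 3 ≤ smallPrimeDvdCount 30 by decide)
    · rw [show (42 : ℝ) = (42 : ℤ) by norm_num, analyticOrderAt_pruitt4_intCast]
      exact_mod_cast (show 3 ≤ smallPrimeDvdCount 42 by decide)

end Interval

/-- The zeros of the fourth Pruitt function of multiplicity at least three in
`[7/2, 49 + 1/3]` are exactly `30` and `42`, both are triple zeros, and there is
no zero of multiplicity four or more in that interval. -/
theorem stmt_16 :
    ({x : ℝ | x ∈ Set.Icc (7 / 2 : ℝ) (49 + 1 / 3) ∧ pruitt4 x = 0 ∧ deriv pruitt4 x = 0 ∧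
        deriv (deriv pruitt4) x = 0} = ({30, 42} : Set ℝ)) ∧
    (∀ x ∈ ({30, 42} : Set ℝ), deriv (deriv (deriv pruitt4)) x ≠ 0) ∧
    (∀ x ∈ Set.Icc (7 / 2 : ℝ) (49 + 1 / 3), pruitt4 x = 0 → deriv pruitt4 x = 0 →
      deriv (deriv pruitt4) x = 0 → deriv (deriv (deriv pruitt4)) x ≠ 0) := by
  have hzero {x : ℝ} (hx : x ∈ Set.Icc (7 / 2 : ℝ) (49 + 1 / 3)) :
      (pruitt4 x = 0 ∧ deriv pruitt4 x = 0 ∧ deriv (deriv pruitt4) x = 0) ↔ x = 30 ∨ x = 42 := by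
    rw [← (analyticAt_pruitt4 x).three_le_analyticOrderAt_iff,
      three_le_analyticOrderAt_pruitt4_iff hx]
  have htriple {x : ℝ} (hx : x ∈ Set.Icc (7 / 2 : ℝ) (49 + 1 / 3))
      (h : pruitt4 x = 0 ∧ deriv pruitt4 x = 0 ∧ deriv (deriv pruitt4) x = 0) :
      deriv (deriv (deriv pruitt4)) x ≠ 0 :=
    (analyticAt_pruitt4 x).deriv_deriv_deriv_ne_zero_of_analyticOrderAt_eq_three <|
      le_antisymm (analyticOrderAt_pruitt4_le_three hx)
        ((analyticAt_pruitt4 x).three_le_analyticOrderAt_iff.2 h)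
  have h30 : (30 : ℝ) ∈ Set.Icc (7 / 2 : ℝ) (49 + 1 / 3) := by norm_num
  have h42 : (42 : ℝ) ∈ Set.Icc (7 / 2 : ℝ) (49 + 1 / 3) := by norm_num
  have hset : {x : ℝ | x ∈ Set.Icc (7 / 2 : ℝ) (49 + 1 / 3) ∧ pruitt4 x = 0 ∧
      deriv pruitt4 x = 0 ∧ deriv (deriv pruitt4) x = 0} = ({30, 42} : Set ℝ) := by
    ext x
    refine ⟨fun ⟨hx, h⟩ => (hzero hx).1 h, ?_⟩
    rintro (rfl | rfl)
    exacts [⟨h30, (hzero h30).2 (.inl rfl)⟩, ⟨h42, (hzero h42).2 (.inr rfl)⟩]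
  refine ⟨hset, fun x hx => ?_, fun x hx h0 h1 h2 => htriple hx ⟨h0, h1, h2⟩⟩
  rw [← hset] at hx
  exact htriple hx.1 hx.2
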